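/- Let n ≥ 5 be odd and consider in ℝ^n the set S = {ε_{2i-1}+ε_{2i} : 1 ≤ i ≤ (n−5)/2} ∪ {ε_{n-4}+ε_{n-2}, ε_{n-3}+ε_n, ε_{n-3}−ε_n} ∪ {ε_{n−3−k} − ε_k : 1 ≤ k ≤ (n−5)/2}. Let h_Λ = span{α^∨ : α ∈ π'} ⊕ k·H^{-1}(ε_n) where π' = π \ {α_{n-3}, α_{n-1}, α_n} in type D_n. Then the restrictions of the elements of S to h_Λ form a basis of h_Λ^*; in particular |S| = n − 2 = dim h_Λ. -/

import Mathlib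

/-!
Write `n = 2m + 5`. The vectors `u = ε_1 + ⋯ + ε_{n-3}` and `v = ε_{n-2} + ε_{n-1}` are orthogonal
to `h_Λ`, and `x ↦ ⟪x, ·⟫|_{h_Λ}` maps `ℝ^n` onto `h_Λ^*` with kernel `h_Λ^⊥`. Hence the
restrictions of `S` span `h_Λ^*` as soon as `S ∪ {u, v}` spans `ℝ^n`, and they form a basis because
`|S| ≤ n - 2 = dim h_Λ`.

For the spanning, `ε_{n-3} ± ε_n` give `ε_{n-3}` and `ε_n`, and `u` minus the pairs
`ε_{2i-1} + ε_{2i}` gives `ε_{n-4}`. The pairs and the differences `ε_{n-3-k} - ε_k` join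
`1, …, n-4` into the single path `n-4, 1, 2, n-5, n-6, 3, 4, …`, along which membership propagates;
`ε_{n-2}` and `ε_{n-1}` then come from `ε_{n-4} + ε_{n-2}` and `v`. The same argument with the
coroots `ε_k - ε_{k+1}` shows `h_Λ + span {u, v} = ℝ^n`, whence `dim h_Λ = n - 2`.
-/

open scoped RealInnerProductSpace

/-- 1-based orthonormal basis vectors `ε_k` of `ℝ^n` (zero out of range). -/
noncomputable def eps (n k : ℕ) : EuclideanSpace ℝ (Fin n) :=
  if h : 1 ≤ k ∧ k ≤ n then EuclideanSpace.single ⟨k - 1, by omega⟩ (1 : ℝ) else 0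

/-- The restriction to the subspace `W` of the linear functional `⟪x, ·⟫`
(i.e. the restriction to `W` of a weight `x`, under the identification of
weights with vectors given by the form). -/
noncomputable def restrictedInner {n : ℕ} (x : EuclideanSpace ℝ (Fin n))
    (W : Submodule ℝ (EuclideanSpace ℝ (Fin n))) : Module.Dual ℝ W where
  toFun w := ⟪x, (w : EuclideanSpace ℝ (Fin n))⟫
  map_add' a b := by simp [inner_add_right]
  map_smul' c a := by simp [inner_smul_right]

/-- The coroots of type `D_n` : `α_k^∨ = ε_k - ε_{k+1}` for `k < n` and
`α_n^∨ = ε_{n-1} + ε_n`. -/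
noncomputable def corootD (n k : ℕ) : EuclideanSpace ℝ (Fin n) :=
  if k = n then eps n (n - 1) + eps n n else eps n k - eps n (k + 1)

theorem forall_of_pair_iff_of_reflect_iff {P : ℕ → Prop} {m : ℕ}
    (hpair : ∀ i, 1 ≤ i → i ≤ m → (P (2 * i - 1) ↔ P (2 * i)))
    (hrefl : ∀ k, 1 ≤ k → k ≤ m → (P (2 * m + 2 - k) ↔ P k))
    (htop : P (2 * m + 1)) : ∀ j, 1 ≤ j → j ≤ 2 * m + 1 → P j := by
  have hrefl' : ∀ k, 1 ≤ k → k ≤ m + 1 → (P (2 * m + 2 - k) ↔ P k) := by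
    intro k hk hkm
    rcases (by omega : k ≤ m ∨ k = m + 1) with hk' | rfl
    · exact hrefl k hk hk'
    · rw [show 2 * m + 2 - (m + 1) = m + 1 by omega]
  -- Walk the path `2m+1, 1, 2, 2m, 2m-1, 3, 4, …`, alternating reflection and pair edges.
  have key : ∀ j, 1 ≤ j → j ≤ m + 1 → P j ∧ P (2 * m + 2 - j) := by
    intro j hj
    induction j, hj using Nat.le_induction with
    | base =>
      intro hm
      have htop' : P (2 * m + 2 - 1) := by simpa using htop
      exact ⟨(hrefl' 1 le_rfl hm).mp htop', htop'⟩
    | succ j hj ih =>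
      intro hjm
      obtain ⟨hlo, hhi⟩ := ih (by omega)
      suffices P (j + 1) ∨ P (2 * m + 2 - (j + 1)) by
        have h := hrefl' (j + 1) (by omega) hjm
        rcases this with h' | h' <;> tauto
      rcases Nat.even_or_odd' j with ⟨i, rfl | rfl⟩
      · right
        have h := hpair (m + 1 - i) (by omega) (by omega)
        rw [show 2 * (m + 1 - i) = 2 * m + 2 - 2 * i by omega,
          show 2 * m + 2 - 2 * i - 1 = 2 * m + 2 - (2 * i + 1) by omega] at h
        exact h.mpr hhi
      · left
        have h := hpair (i + 1) (by omega) (by omega)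
        rw [show 2 * (i + 1) - 1 = 2 * i + 1 by omega] at h
        exact h.mp hlo
  intro j hj1 hj2
  rcases (by omega : j ≤ m + 1 ∨ m + 1 < j) with hj | hj
  · exact (key j hj1 hj).1
  · simpa [show 2 * m + 2 - (2 * m + 2 - j) = j by omega]
      using (key (2 * m + 2 - j) (by omega) (by omega)).2

namespace Submodule

section Ring

variable {R M : Type*} [Ring R] [AddCommGroup M] [Module R M] {p : Submodule R M} {x y : M}

theorem mem_iff_of_add_mem (h : x + y ∈ p) : x ∈ p ↔ y ∈ p :=
  ⟨fun hx => (p.add_mem_iff_right hx).mp h, fun hy => (p.add_mem_iff_left hy).mp h⟩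

theorem mem_iff_of_sub_mem (h : x - y ∈ p) : x ∈ p ↔ y ∈ p :=
  ⟨fun hx => (p.sub_mem_iff_right hx).mp h, fun hy => (p.sub_mem_iff_left hy).mp h⟩

theorem sum_range_two_mul_mem {e : ℕ → M} {m : ℕ}
    (h : ∀ i, 1 ≤ i → i ≤ m → e (2 * i - 1) + e (2 * i) ∈ p) :
    ∑ j ∈ Finset.range (2 * m), e (j + 1) ∈ p := by
  induction m with
  | zero => simp
  | succ m ih =>
    rw [show 2 * (m + 1) = 2 * m + 1 + 1 by ring, Finset.sum_range_succ, Finset.sum_range_succ,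
      add_assoc]
    refine p.add_mem (ih fun i h1 h2 => h i h1 (by omega)) ?_
    simpa [mul_add] using h (m + 1) (by omega) le_rfl

end Ring

section DivisionRing

variable {K M : Type*} [DivisionRing K] [CharZero K] [AddCommGroup M] [Module K M]
  {p : Submodule K M}

theorem mem_of_add_mem_of_sub_mem {x y : M} (h₁ : x + y ∈ p) (h₂ : x - y ∈ p) :
    x ∈ p ∧ y ∈ p := by
  have hx : x ∈ p := by
    rw [← p.smul_mem_iff (two_ne_zero (α := K)), two_smul]
    simpa [add_add_sub_cancel] using p.add_mem h₁ h₂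
  exact ⟨hx, (mem_iff_of_add_mem h₁).mp hx⟩

theorem mem_of_sub_succ_mem_of_sum_mem {e : ℕ → M} {N : ℕ}
    (hsucc : ∀ k, 1 ≤ k → k < N → e k - e (k + 1) ∈ p)
    (hsum : ∑ j ∈ Finset.range N, e (j + 1) ∈ p) : ∀ j, 1 ≤ j → j ≤ N → e j ∈ p := by
  have hdiff : ∀ j, 1 ≤ j → j ≤ N → e j - e 1 ∈ p := by
    intro j hj
    induction j, hj using Nat.le_induction with
    | base => simp
    | succ j hj ih =>
      intro hjN
      have h := p.sub_mem (ih (by omega)) (hsucc j hj (by omega))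
      rwa [sub_sub_sub_cancel_left] at h
  have hN : (N : K) • e 1 ∈ p := by
    rw [Nat.cast_smul_eq_nsmul]
    have h := p.sub_mem hsum (p.sum_mem fun j hj => hdiff (j + 1) (by omega)
      (by simpa using Finset.mem_range.mp hj))
    simpa [← Finset.sum_sub_distrib] using h
  intro j hj1 hjN
  have he1 : e 1 ∈ p := (p.smul_mem_iff (Nat.cast_ne_zero.mpr (by omega))).mp hN
  simpa using p.add_mem (hdiff j hj1 hjN) he1

end DivisionRing

end Submodule

theorem Set.encard_setOf_exists_Icc_le {α : Type*} (f : ℕ → α) (m : ℕ) :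
    {v | ∃ i, 1 ≤ i ∧ i ≤ m ∧ v = f i}.encard ≤ m := by
  have h : {v | ∃ i, 1 ≤ i ∧ i ≤ m ∧ v = f i} = f '' (Finset.Icc 1 m : Set ℕ) := by
    ext v
    simp [eq_comm, and_assoc]
  rw [h]
  refine (Set.encard_image_le _ _).trans ?_
  rw [Set.encard_coe_eq_coe_finsetCard]
  simp

theorem Submodule.finrank_span_le_of_encard_le {K M : Type*} [DivisionRing K] [AddCommGroup M]
    [Module K M] {s : Set M} {k : ℕ} (h : s.encard ≤ k) : Module.finrank K (span K s) ≤ k := by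
  obtain ⟨hfin, hcard⟩ := Set.encard_le_coe_iff_finite_ncard_le.mp h
  have := hfin.fintype
  exact (finrank_span_le_card s).trans (by rwa [← Set.ncard_eq_toFinset_card'])

theorem LinearMap.ncard_eq_finrank_and_isBasis_of_sup_ker_eq_top {K M V : Type*} [Field K]
    [AddCommGroup M] [Module K M] [AddCommGroup V] [Module K V] [FiniteDimensional K V]
    {f : M →ₗ[K] V} (hf : range f = ⊤) {S : Set M} (hcard : S.encard ≤ Module.finrank K V)
    (hspan : Submodule.span K S ⊔ ker f = ⊤) :
    S.ncard = Module.finrank K V ∧ LinearIndependent K (fun x : S => f x) ∧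
      Submodule.span K (Set.range fun x : S => f x) = ⊤ := by
  obtain ⟨hfin, hle⟩ := Set.encard_le_coe_iff_finite_ncard_le.mp hcard
  have := hfin.fintype
  have htop : Submodule.span K (Set.range fun x : S => f x) = ⊤ := by
    rw [← Set.image_eq_range, Submodule.span_image]
    exact (LinearMap.map_eq_top_iff hf).mpr hspan
  have hcard' : S.ncard = Module.finrank K V := by
    refine le_antisymm hle ?_
    calc Module.finrank K V = Set.finrank K (Set.range fun x : S => f x) := by
          rw [Set.finrank, htop, finrank_top]
      _ ≤ Fintype.card S := finrank_range_le_card _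
      _ = S.ncard := by rw [← Nat.card_eq_fintype_card, Nat.card_coe_set_eq]
  refine ⟨hcard', linearIndependent_of_top_le_span_of_card_eq_finrank htop.ge ?_, htop⟩
  rwa [← Nat.card_eq_fintype_card, Nat.card_coe_set_eq]

section Euclidean

variable {n : ℕ}

noncomputable def restrictedInnerₗ (W : Submodule ℝ (EuclideanSpace ℝ (Fin n))) :
    EuclideanSpace ℝ (Fin n) →ₗ[ℝ] Module.Dual ℝ W where
  toFun x := restrictedInner x W
  map_add' x y := by ext w; simp [restrictedInner, inner_add_left]
  map_smul' c x := by ext w; simp [restrictedInner, inner_smul_left]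

theorem ker_restrictedInnerₗ (W : Submodule ℝ (EuclideanSpace ℝ (Fin n))) :
    LinearMap.ker (restrictedInnerₗ W) = Wᗮ := by
  ext x
  simp only [LinearMap.mem_ker, Submodule.mem_orthogonal', LinearMap.ext_iff, Subtype.forall]
  rfl

theorem range_restrictedInnerₗ (W : Submodule ℝ (EuclideanSpace ℝ (Fin n))) :
    LinearMap.range (restrictedInnerₗ W) = ⊤ := by
  apply Submodule.eq_top_of_finrank_eq
  have h := LinearMap.finrank_range_add_finrank_ker (restrictedInnerₗ W)
  rw [ker_restrictedInnerₗ, ← Submodule.finrank_add_finrank_orthogonal W] at h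
  rw [Subspace.dual_finrank_eq]
  omega

theorem eps_succ (i : Fin n) : eps n (i + 1) = EuclideanSpace.single i 1 := by
  simp [eps]

theorem inner_eps_eps (a b : ℕ) :
    ⟪eps n a, eps n b⟫ = if a = b ∧ 1 ≤ a ∧ a ≤ n then 1 else 0 := by
  unfold eps
  split_ifs <;> simp_all [EuclideanSpace.inner_single_left, Fin.ext_iff] <;> omega

theorem inner_eps_sum_range {N a : ℕ} (hN : N ≤ n) :
    ⟪eps n a, ∑ j ∈ Finset.range N, eps n (j + 1)⟫ = if 1 ≤ a ∧ a ≤ N then 1 else 0 := by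
  induction N with
  | zero => rw [Finset.sum_range_zero, inner_zero_right, if_neg (by omega)]
  | succ N ih =>
    rw [Finset.sum_range_succ, inner_add_right, ih (by omega), inner_eps_eps]
    split_ifs <;> norm_num <;> omega

theorem eq_top_of_forall_eps_mem {V : Submodule ℝ (EuclideanSpace ℝ (Fin n))}
    (h : ∀ k, 1 ≤ k → k ≤ n → eps n k ∈ V) : V = ⊤ := by
  rw [eq_top_iff, ← (EuclideanSpace.basisFun (Fin n) ℝ).toBasis.span_eq, Submodule.span_le]
  rintro _ ⟨i, rfl⟩
  simpa [eps_succ] using h (i + 1) (by omega) (by omega)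

end Euclidean

section TypeD

variable (m : ℕ)

local notation "ε" => eps (2 * m + 5)

-- For `n = 2m + 5`: the set `S` of the statement, and the spanning set
-- `{α^∨ : α ∈ π'} ∪ {H⁻¹(ε_n)}` of `h_Λ`.
noncomputable def weightSet : Set (EuclideanSpace ℝ (Fin (2 * m + 5))) :=
  {v | ∃ i, 1 ≤ i ∧ i ≤ m ∧ v = ε (2 * i - 1) + ε (2 * i)}
    ∪ {ε (2 * m + 1) + ε (2 * m + 3), ε (2 * m + 2) + ε (2 * m + 5), ε (2 * m + 2) - ε (2 * m + 5)}
    ∪ {v | ∃ k, 1 ≤ k ∧ k ≤ m ∧ v = ε (2 * m + 2 - k) - ε k}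

noncomputable def corootSet : Set (EuclideanSpace ℝ (Fin (2 * m + 5))) :=
  {v | ∃ k, 1 ≤ k ∧ k ≤ 2 * m + 5 ∧ k ≠ 2 * m + 2 ∧ k ≠ 2 * m + 4 ∧ k ≠ 2 * m + 5 ∧
      v = corootD (2 * m + 5) k}
    ∪ {ε (2 * m + 5)}

-- These two vectors span the orthogonal complement of `h_Λ = span (corootSet m)`.
noncomputable def perpU : EuclideanSpace ℝ (Fin (2 * m + 5)) :=
  ∑ j ∈ Finset.range (2 * m + 2), ε (j + 1)

noncomputable def perpV : EuclideanSpace ℝ (Fin (2 * m + 5)) :=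
  ε (2 * m + 3) + ε (2 * m + 4)

theorem encard_weightSet_le : (weightSet m).encard ≤ (2 * m + 3 : ℕ) := by
  have h3 : ({ε (2 * m + 1) + ε (2 * m + 3), ε (2 * m + 2) + ε (2 * m + 5),
      ε (2 * m + 2) - ε (2 * m + 5)} : Set (EuclideanSpace ℝ (Fin (2 * m + 5)))).encard ≤ 3 :=
    (Set.encard_insert_le _ _).trans (by grw [Set.encard_insert_le, Set.encard_singleton]; rfl)
  calc (weightSet m).encard ≤ m + 3 + m := by
        grw [weightSet, Set.encard_union_le, Set.encard_union_le, Set.encard_setOf_exists_Icc_le,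
          Set.encard_setOf_exists_Icc_le, h3]
    _ = (2 * m + 3 : ℕ) := by push_cast; ring

theorem encard_corootSet_le : (corootSet m).encard ≤ (2 * m + 3 : ℕ) := by
  have hsub : {v | ∃ k, 1 ≤ k ∧ k ≤ 2 * m + 5 ∧ k ≠ 2 * m + 2 ∧ k ≠ 2 * m + 4 ∧
      k ≠ 2 * m + 5 ∧ v = corootD (2 * m + 5) k} ⊆
        corootD (2 * m + 5) '' insert (2 * m + 3) (Finset.Icc 1 (2 * m + 1) : Set ℕ) := by
    rintro _ ⟨k, h1, h2, h3, h4, h5, rfl⟩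
    refine ⟨k, ?_, rfl⟩
    simp only [Set.mem_insert_iff, Finset.coe_Icc, Set.mem_Icc]
    omega
  calc (corootSet m).encard ≤ (2 * m + 1 + 1) + 1 := by
        grw [corootSet, Set.encard_union_le, Set.encard_singleton, Set.encard_le_encard hsub,
          Set.encard_image_le, Set.encard_insert_le, Set.encard_coe_eq_coe_finsetCard]
        simp
    _ = (2 * m + 3 : ℕ) := by push_cast; ring

theorem perpU_eq : perpU m = ∑ j ∈ Finset.range (2 * m), ε (j + 1)
    + ε (2 * m + 1) + ε (2 * m + 2) := by
  rw [perpU, Finset.sum_range_succ, Finset.sum_range_succ]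

theorem inner_eps_perpU (a : ℕ) : ⟪ε a, perpU m⟫ = if 1 ≤ a ∧ a ≤ 2 * m + 2 then 1 else 0 :=
  inner_eps_sum_range (by omega)

theorem inner_eps_perpV (a : ℕ) :
    ⟪ε a, perpV m⟫ = if a = 2 * m + 3 ∨ a = 2 * m + 4 then 1 else 0 := by
  rw [perpV, inner_add_right, inner_eps_eps, inner_eps_eps]
  split_ifs <;> norm_num <;> omega

theorem span_perp_le_orthogonal_span_corootSet :
    Submodule.span ℝ {perpU m, perpV m} ≤ (Submodule.span ℝ (corootSet m))ᗮ := by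
  refine (Submodule.isOrtho_span.mpr ?_).symm.le
  rintro _ hg _ hp
  rcases hg with ⟨k, h1, -, h3, h4, h5, rfl⟩ | rfl
  · rcases hp with rfl | rfl <;>
      simp only [corootD, if_neg h5, inner_sub_left, inner_eps_perpU, inner_eps_perpV] <;>
      split_ifs <;> norm_num <;> omega
  · rcases hp with rfl | rfl <;> simp [inner_eps_perpU, inner_eps_perpV]

theorem span_weightSet_sup_span_perp :
    Submodule.span ℝ (weightSet m) ⊔ Submodule.span ℝ {perpU m, perpV m} = ⊤ := by
  set V := Submodule.span ℝ (weightSet m) ⊔ Submodule.span ℝ {perpU m, perpV m}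
  have hS : ∀ x ∈ weightSet m, x ∈ V := fun x hx =>
    Submodule.mem_sup_left (Submodule.subset_span hx)
  have hU : perpU m ∈ V := Submodule.mem_sup_right (Submodule.subset_span (by simp))
  have hV : perpV m ∈ V := Submodule.mem_sup_right (Submodule.subset_span (by simp))
  have hpair : ∀ i, 1 ≤ i → i ≤ m → ε (2 * i - 1) + ε (2 * i) ∈ V := fun i h1 h2 =>
    hS _ (.inl (.inl ⟨i, h1, h2, rfl⟩))
  have hrefl : ∀ k, 1 ≤ k → k ≤ m → ε (2 * m + 2 - k) - ε k ∈ V := fun k h1 h2 =>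
    hS _ (.inr ⟨k, h1, h2, rfl⟩)
  obtain ⟨he2, he5⟩ : ε (2 * m + 2) ∈ V ∧ ε (2 * m + 5) ∈ V :=
    Submodule.mem_of_add_mem_of_sub_mem (hS _ (.inl (.inr (.inr (.inl rfl)))))
      (hS _ (.inl (.inr (.inr (.inr rfl)))))
  have he1 : ε (2 * m + 1) ∈ V := by
    have h : ε (2 * m + 1) = perpU m - ∑ j ∈ Finset.range (2 * m), ε (j + 1) - ε (2 * m + 2) := by
      rw [perpU_eq]; abel
    rw [h]
    exact V.sub_mem (V.sub_mem hU (V.sum_range_two_mul_mem hpair)) he2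
  have hlow : ∀ j, 1 ≤ j → j ≤ 2 * m + 1 → ε j ∈ V :=
    forall_of_pair_iff_of_reflect_iff (fun i h1 h2 => Submodule.mem_iff_of_add_mem (hpair i h1 h2))
      (fun k h1 h2 => Submodule.mem_iff_of_sub_mem (hrefl k h1 h2)) he1
  have he3 : ε (2 * m + 3) ∈ V :=
    (Submodule.mem_iff_of_add_mem (hS _ (.inl (.inr (.inl rfl))))).mp he1
  have he4 : ε (2 * m + 4) ∈ V := (Submodule.mem_iff_of_add_mem hV).mp he3
  refine eq_top_of_forall_eps_mem fun j hj1 hj2 => ?_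
  rcases (by omega : j ≤ 2 * m + 1 ∨ j = 2 * m + 2 ∨ j = 2 * m + 3 ∨ j = 2 * m + 4 ∨
    j = 2 * m + 5) with hj | rfl | rfl | rfl | rfl
  exacts [hlow j hj1 hj, he2, he3, he4, he5]

theorem span_corootSet_sup_span_perp :
    Submodule.span ℝ (corootSet m) ⊔ Submodule.span ℝ {perpU m, perpV m} = ⊤ := by
  set V := Submodule.span ℝ (corootSet m) ⊔ Submodule.span ℝ {perpU m, perpV m}
  have hcoroot : ∀ k, 1 ≤ k → k ≤ 2 * m + 3 → k ≠ 2 * m + 2 → ε k - ε (k + 1) ∈ V :=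
    fun k h1 h2 h3 => Submodule.mem_sup_left (Submodule.subset_span (.inl
      ⟨k, h1, by omega, h3, by omega, by omega, by simp [corootD, show k ≠ 2 * m + 5 by omega]⟩))
  have hU : perpU m ∈ V := Submodule.mem_sup_right (Submodule.subset_span (by simp))
  have hV : perpV m ∈ V := Submodule.mem_sup_right (Submodule.subset_span (by simp))
  have hlow : ∀ j, 1 ≤ j → j ≤ 2 * m + 2 → ε j ∈ V :=
    Submodule.mem_of_sub_succ_mem_of_sum_mem
      (fun k h1 h2 => hcoroot k h1 (by omega) (by omega)) hU
  obtain ⟨he3, he4⟩ : ε (2 * m + 3) ∈ V ∧ ε (2 * m + 4) ∈ V :=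
    Submodule.mem_of_add_mem_of_sub_mem hV (hcoroot (2 * m + 3) (by omega) le_rfl (by omega))
  have he5 : ε (2 * m + 5) ∈ V := Submodule.mem_sup_left (Submodule.subset_span (.inr rfl))
  refine eq_top_of_forall_eps_mem fun j hj1 hj2 => ?_
  rcases (by omega : j ≤ 2 * m + 2 ∨ j = 2 * m + 3 ∨ j = 2 * m + 4 ∨ j = 2 * m + 5)
    with hj | rfl | rfl | rfl
  exacts [hlow j hj1 hj, he3, he4, he5]

theorem finrank_span_corootSet : Module.finrank ℝ (Submodule.span ℝ (corootSet m)) = 2 * m + 3 := by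
  refine le_antisymm (Submodule.finrank_span_le_of_encard_le (encard_corootSet_le m)) ?_
  have hpair : Module.finrank ℝ (Submodule.span ℝ {perpU m, perpV m}) ≤ 2 :=
    Submodule.finrank_span_le_of_encard_le
      (by grw [Set.encard_insert_le, Set.encard_singleton]; rfl)
  have h := Submodule.finrank_add_le_finrank_add_finrank (Submodule.span ℝ (corootSet m))
    (Submodule.span ℝ {perpU m, perpV m})
  rw [span_corootSet_sup_span_perp, finrank_top, finrank_euclideanSpace_fin] at h
  omega

end TypeD

/-- Type `D_n`, `n ≥ 5` odd,
`π' = π \ {α_{n-3}, α_{n-1}, α_n}`. With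
`S = {ε_{2i-1} + ε_{2i} : 1 ≤ i ≤ (n-5)/2} ∪ {ε_{n-4} + ε_{n-2},
ε_{n-3} + ε_n, ε_{n-3} - ε_n} ∪ {ε_{n-3-k} - ε_k : 1 ≤ k ≤ (n-5)/2}` and
`h_Λ = span{α^∨ : α ∈ π'} ⊕ k·H⁻¹(ε_n)` (where `H⁻¹(ε_n)` pairs with a weight
`λ` as `(λ, ε_n)`), the restrictions of the elements of `S` to `h_Λ` form a
basis of `h_Λ^*`; in particular `|S| = n - 2 = dim h_Λ`. -/
theorem statement_19 (n : ℕ) (hn : 5 ≤ n) (hnodd : Odd n)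
    (S : Set (EuclideanSpace ℝ (Fin n)))
    (hS : S = {v | ∃ i, 1 ≤ i ∧ i ≤ (n - 5) / 2 ∧ v = eps n (2 * i - 1) + eps n (2 * i)}
        ∪ {eps n (n - 4) + eps n (n - 2), eps n (n - 3) + eps n n, eps n (n - 3) - eps n n}
        ∪ {v | ∃ k, 1 ≤ k ∧ k ≤ (n - 5) / 2 ∧ v = eps n (n - 3 - k) - eps n k})
    (hΛ : Submodule ℝ (EuclideanSpace ℝ (Fin n)))
    (hhΛ : hΛ = Submodule.span ℝ
        ({v | ∃ k, 1 ≤ k ∧ k ≤ n ∧ k ≠ n - 3 ∧ k ≠ n - 1 ∧ k ≠ n ∧ v = corootD n k}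
          ∪ {eps n n})) :
    S.ncard = n - 2 ∧ Module.finrank ℝ hΛ = n - 2 ∧
    LinearIndependent ℝ (fun x : S => restrictedInner (x : EuclideanSpace ℝ (Fin n)) hΛ) ∧
    Submodule.span ℝ
      (Set.range (fun x : S => restrictedInner (x : EuclideanSpace ℝ (Fin n)) hΛ)) = ⊤ := by
  obtain ⟨m, rfl⟩ : ∃ m, n = 2 * m + 5 := by
    obtain ⟨j, hj⟩ := hnodd
    exact ⟨j - 2, by omega⟩
  simp only [show (2 * m + 5 - 5) / 2 = m by omega, show 2 * m + 5 - 4 = 2 * m + 1 by omega,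
    show 2 * m + 5 - 3 = 2 * m + 2 by omega, show 2 * m + 5 - 2 = 2 * m + 3 by omega,
    show 2 * m + 5 - 1 = 2 * m + 4 by omega] at hS hhΛ ⊢
  change S = weightSet m at hS
  change hΛ = Submodule.span ℝ (corootSet m) at hhΛ
  subst hS hhΛ
  have hrank := finrank_span_corootSet m
  have hsup : Submodule.span ℝ (weightSet m) ⊔
      LinearMap.ker (restrictedInnerₗ (Submodule.span ℝ (corootSet m))) = ⊤ := by
    refine top_unique (span_weightSet_sup_span_perp m ▸ sup_le_sup_left ?_ _)
    exact (span_perp_le_orthogonal_span_corootSet m).trans (ker_restrictedInnerₗ _).ge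
  obtain ⟨hcard, hindep, hspan⟩ :=
    LinearMap.ncard_eq_finrank_and_isBasis_of_sup_ker_eq_top (range_restrictedInnerₗ _)
      (by rw [Subspace.dual_finrank_eq, hrank]; exact encard_weightSet_le m) hsup
  rw [Subspace.dual_finrank_eq, hrank] at hcard
  exact ⟨hcard, hrank, hindep, hspan⟩
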